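/- Let λ > 1, μ = √(λ²−1), and define X : ℝ² → ℝ³ by X(u,v) = ( λ·u − sinh u·sin v , (1/2)·((μ − λ)·(sinh²u + cosh²u)·sin v·cos v + 2·cosh u·cos v + (μ + λ)·v) , sinh u·cos v·((μ − λ)·cosh u·sin v + 1) ). Then: (i) each coordinate function of X is harmonic on ℝ² (∂²X_k/∂u² + ∂²X_k/∂v² = 0); (ii) X is Lorentz-conformal, i.e. ⟨X_u,X_u⟩_L = ⟨X_v,X_v⟩_L and ⟨X_u,X_v⟩_L = 0 everywhere; and (iii) X(u,0) = (λ·u, cosh u, sinh u) for all u ∈ ℝ. -/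
import Mathlib


open Real

/-- Lorentzian inner product on ℝ³: ⟨p,q⟩ = p₁q₁ + p₂q₂ − p₃q₃. -/
noncomputable def lorentz (p q : ℝ × ℝ × ℝ) : ℝ :=
  p.1 * q.1 + p.2.1 * q.2.1 - p.2.2 * q.2.2

/-- First coordinate of the helicoidal helicoid over a helix of type I, case a = 1. -/
noncomputable def X1 (lam mu u v : ℝ) : ℝ :=
  lam * u - sinh u * sin v

/-- Second coordinate of the helicoidal helicoid over a helix of type I, case a = 1. -/
noncomputable def X2 (lam mu u v : ℝ) : ℝ :=
  (1/2) * ((mu - lam) * (sinh u ^ 2 + cosh u ^ 2) * sin v * cos v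
    + 2 * cosh u * cos v + (mu + lam) * v)

/-- Third coordinate of the helicoidal helicoid over a helix of type I, case a = 1. -/
noncomputable def X3 (lam mu u v : ℝ) : ℝ :=
  sinh u * cos v * ((mu - lam) * cosh u * sin v + 1)

/-- Partial derivative of X with respect to u. -/
noncomputable def Xu (lam mu u v : ℝ) : ℝ × ℝ × ℝ :=
  (deriv (fun s => X1 lam mu s v) u, deriv (fun s => X2 lam mu s v) u,
   deriv (fun s => X3 lam mu s v) u)

/-- Partial derivative of X with respect to v. -/
noncomputable def Xv (lam mu u v : ℝ) : ℝ × ℝ × ℝ :=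
  (deriv (fun t => X1 lam mu u t) v, deriv (fun t => X2 lam mu u t) v,
   deriv (fun t => X3 lam mu u t) v)


section helpers

lemma hX1u (lam mu u v : ℝ) : HasDerivAt (fun s => X1 lam mu s v) (lam - cosh u * sin v) u := by
  unfold X1
  have h := ((hasDerivAt_id u).const_mul lam).sub ((Real.hasDerivAt_sinh u).mul_const (sin v))
  apply h.congr_deriv; ring

lemma hX1uu (lam mu u v : ℝ) :
    HasDerivAt (fun w => lam - cosh w * sin v) (-(sinh u * sin v)) u := by
  have h := (hasDerivAt_const u lam).sub ((Real.hasDerivAt_cosh u).mul_const (sin v))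
  apply h.congr_deriv; ring

lemma hX1v (lam mu u v : ℝ) : HasDerivAt (fun t => X1 lam mu u t) (-(sinh u * cos v)) v := by
  unfold X1
  have h := (hasDerivAt_const v (lam * u)).sub ((Real.hasDerivAt_sin v).const_mul (sinh u))
  apply h.congr_deriv; ring

lemma hX1vv (lam mu u v : ℝ) :
    HasDerivAt (fun w => -(sinh u * cos w)) (sinh u * sin v) v := by
  have h := ((Real.hasDerivAt_cos v).const_mul (sinh u)).neg
  apply h.congr_deriv; ring

lemma hX2u (lam mu u v : ℝ) : HasDerivAt (fun s => X2 lam mu s v)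
    (2*(mu-lam)*sinh u*cosh u*sin v*cos v + sinh u*cos v) u := by
  unfold X2
  have h := ((((((Real.hasDerivAt_sinh u).pow 2).add ((Real.hasDerivAt_cosh u).pow 2)).const_mul
      (mu - lam)).mul_const (sin v)).mul_const (cos v)).add
      (((Real.hasDerivAt_cosh u).const_mul 2).mul_const (cos v)) |>.add
      (hasDerivAt_const u ((mu + lam) * v)) |>.const_mul (1/2)
  apply h.congr_deriv; push_cast; ring

lemma hX2uu (lam mu u v : ℝ) :
    HasDerivAt (fun w => 2*(mu-lam)*sinh w*cosh w*sin v*cos v + sinh w*cos v)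
    (2*(mu-lam)*(cosh u^2 + sinh u^2)*sin v*cos v + cosh u*cos v) u := by
  have h := (((((Real.hasDerivAt_sinh u).const_mul (2*(mu-lam))).mul
      (Real.hasDerivAt_cosh u)).mul_const (sin v)).mul_const (cos v)).add
      ((Real.hasDerivAt_sinh u).mul_const (cos v))
  apply h.congr_deriv; ring

lemma hX2v (lam mu u v : ℝ) : HasDerivAt (fun t => X2 lam mu u t)
    ((1/2)*((mu-lam)*(sinh u^2+cosh u^2)*(cos v^2 - sin v^2) - 2*cosh u*sin v + (mu+lam))) v := by
  unfold X2
  have h := ((((Real.hasDerivAt_sin v).const_mul ((mu - lam) * (sinh u ^ 2 + cosh u ^ 2))).mul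
      (Real.hasDerivAt_cos v)).add ((Real.hasDerivAt_cos v).const_mul (2 * cosh u))).add
      ((hasDerivAt_id v).const_mul (mu + lam)) |>.const_mul (1/2)
  apply h.congr_deriv; ring

lemma hX2vv (lam mu u v : ℝ) : HasDerivAt
    (fun w => (1/2)*((mu-lam)*(sinh u^2+cosh u^2)*(cos w^2 - sin w^2) - 2*cosh u*sin w + (mu+lam)))
    ((1/2)*((mu-lam)*(sinh u^2+cosh u^2)*(-(4*sin v*cos v)) - 2*cosh u*cos v)) v := by
  have h := (((((Real.hasDerivAt_cos v).pow 2).sub ((Real.hasDerivAt_sin v).pow 2)).const_mul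
      ((mu - lam) * (sinh u ^ 2 + cosh u ^ 2))).sub
      ((Real.hasDerivAt_sin v).const_mul (2 * cosh u))).add_const (mu + lam) |>.const_mul (1/2)
  apply h.congr_deriv; push_cast; ring

lemma hX3u (lam mu u v : ℝ) : HasDerivAt (fun s => X3 lam mu s v)
    ((mu-lam)*(cosh u^2+sinh u^2)*sin v*cos v + cosh u*cos v) u := by
  unfold X3
  have h := ((Real.hasDerivAt_sinh u).mul_const (cos v)).mul
      ((((Real.hasDerivAt_cosh u).const_mul (mu - lam)).mul_const (sin v)).add_const 1)
  apply h.congr_deriv; ring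

lemma hX3uu (lam mu u v : ℝ) :
    HasDerivAt (fun w => (mu-lam)*(cosh w^2+sinh w^2)*sin v*cos v + cosh w*cos v)
    (4*(mu-lam)*sinh u*cosh u*sin v*cos v + sinh u*cos v) u := by
  have h := ((((((Real.hasDerivAt_cosh u).pow 2).add ((Real.hasDerivAt_sinh u).pow 2)).const_mul
      (mu - lam)).mul_const (sin v)).mul_const (cos v)).add
      ((Real.hasDerivAt_cosh u).mul_const (cos v))
  apply h.congr_deriv; push_cast; ring

lemma hX3v (lam mu u v : ℝ) : HasDerivAt (fun t => X3 lam mu u t)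
    ((mu-lam)*sinh u*cosh u*(cos v^2 - sin v^2) - sinh u*sin v) v := by
  unfold X3
  have h := (((Real.hasDerivAt_cos v).const_mul (sinh u)).mul
      (((Real.hasDerivAt_sin v).const_mul ((mu - lam) * cosh u)).add_const 1))
  apply h.congr_deriv; ring

lemma hX3vv (lam mu u v : ℝ) :
    HasDerivAt (fun w => (mu-lam)*sinh u*cosh u*(cos w^2 - sin w^2) - sinh u*sin w)
    (-(4*(mu-lam)*sinh u*cosh u*sin v*cos v) - sinh u*cos v) v := by
  have h := ((((Real.hasDerivAt_cos v).pow 2).sub ((Real.hasDerivAt_sin v).pow 2)).const_mul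
      ((mu - lam) * sinh u * cosh u)).sub ((Real.hasDerivAt_sin v).const_mul (sinh u))
  apply h.congr_deriv; push_cast; ring

lemma dX1u (lam mu v : ℝ) : deriv (fun s => X1 lam mu s v) = fun u => lam - cosh u * sin v :=
  funext fun u => (hX1u lam mu u v).deriv

lemma dX1v (lam mu u : ℝ) : deriv (fun t => X1 lam mu u t) = fun v => -(sinh u * cos v) :=
  funext fun v => (hX1v lam mu u v).deriv

lemma dX2u (lam mu v : ℝ) : deriv (fun s => X2 lam mu s v)
    = fun u => 2*(mu-lam)*sinh u*cosh u*sin v*cos v + sinh u*cos v :=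
  funext fun u => (hX2u lam mu u v).deriv

lemma dX2v (lam mu u : ℝ) : deriv (fun t => X2 lam mu u t)
    = fun v => (1/2)*((mu-lam)*(sinh u^2+cosh u^2)*(cos v^2 - sin v^2) - 2*cosh u*sin v + (mu+lam)) :=
  funext fun v => (hX2v lam mu u v).deriv

lemma dX3u (lam mu v : ℝ) : deriv (fun s => X3 lam mu s v)
    = fun u => (mu-lam)*(cosh u^2+sinh u^2)*sin v*cos v + cosh u*cos v :=
  funext fun u => (hX3u lam mu u v).deriv

lemma dX3v (lam mu u : ℝ) : deriv (fun t => X3 lam mu u t)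
    = fun v => (mu-lam)*sinh u*cosh u*(cos v^2 - sin v^2) - sinh u*sin v :=
  funext fun v => (hX3v lam mu u v).deriv

end helpers

/-- The helicoidal helicoid over a helix of type I with a = 1 is harmonic,
Lorentz-conformal, and contains the helix (λu, cosh u, sinh u). -/
theorem helicoidal_helicoid_spacelike_typeI_a_eq_one (lam mu : ℝ)
    (hlam : 1 < lam) (hmu : mu = Real.sqrt (lam^2 - 1)) :
    (∀ u v : ℝ,
      deriv (deriv (fun s => X1 lam mu s v)) u + deriv (deriv (fun t => X1 lam mu u t)) v = 0 ∧
      deriv (deriv (fun s => X2 lam mu s v)) u + deriv (deriv (fun t => X2 lam mu u t)) v = 0 ∧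
      deriv (deriv (fun s => X3 lam mu s v)) u + deriv (deriv (fun t => X3 lam mu u t)) v = 0) ∧
    (∀ u v : ℝ,
      lorentz (Xu lam mu u v) (Xu lam mu u v) = lorentz (Xv lam mu u v) (Xv lam mu u v) ∧
      lorentz (Xu lam mu u v) (Xv lam mu u v) = 0) ∧
    (∀ u : ℝ, (X1 lam mu u 0, X2 lam mu u 0, X3 lam mu u 0) = (lam * u, cosh u, sinh u)) := by
  have hlam0 : (0:ℝ) < lam ^ 2 - 1 := by nlinarith
  have hm : mu ^ 2 = lam ^ 2 - 1 := by
    rw [hmu, sq_sqrt hlam0.le]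
  refine ⟨fun u v => ?_, fun u v => ?_, fun u => ?_⟩
  · rw [dX1u, dX1v, dX2u, dX2v, dX3u, dX3v,
      (hX1uu lam mu u v).deriv, (hX1vv lam mu u v).deriv, (hX2uu lam mu u v).deriv,
      (hX2vv lam mu u v).deriv, (hX3uu lam mu u v).deriv, (hX3vv lam mu u v).deriv]
    refine ⟨by ring, by ring, by ring⟩
  · have hXu : Xu lam mu u v = (lam - cosh u * sin v,
        2*(mu-lam)*sinh u*cosh u*sin v*cos v + sinh u*cos v,
        (mu-lam)*(cosh u^2+sinh u^2)*sin v*cos v + cosh u*cos v) := by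
      simp only [Xu, (hX1u lam mu u v).deriv, (hX2u lam mu u v).deriv, (hX3u lam mu u v).deriv]
    have hXv : Xv lam mu u v = (-(sinh u * cos v),
        (1/2)*((mu-lam)*(sinh u^2+cosh u^2)*(cos v^2 - sin v^2) - 2*cosh u*sin v + (mu+lam)),
        (mu-lam)*sinh u*cosh u*(cos v^2 - sin v^2) - sinh u*sin v) := by
      simp only [Xv, (hX1v lam mu u v).deriv, (hX2v lam mu u v).deriv, (hX3v lam mu u v).deriv]
    rw [hXu, hXv]
    have hc : cosh u ^ 2 = sinh u ^ 2 + 1 := Real.cosh_sq u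
    have hS : sin v ^ 2 = 1 - cos v ^ 2 := Real.sin_sq v
    unfold lorentz
    constructor
    · linear_combination ((-1)*(cos v)^2 + (-1)*mu*(cosh u)*(sin v)*(cos v)^2 + (-1)*mu*(cosh u)*(sin v)^3 + (-1/2)*mu^2*(cos v)^2 + (-1/4)*mu^2*(cos v)^4 + (1/2)*mu^2*(sin v)^2 + (-1/2)*mu^2*(sin v)^2*(cos v)^2 + (-1/4)*mu^2*(sin v)^4 + (-1/4)*mu^2*(cosh u)^2*(cos v)^4 + (-1/2)*mu^2*(cosh u)^2*(sin v)^2*(cos v)^2 + (-1/4)*mu^2*(cosh u)^2*(sin v)^4 + (1/4)*mu^2*(sinh u)^2*(cos v)^4 + (1/2)*mu^2*(sinh u)^2*(sin v)^2*(cos v)^2 + (1/4)*mu^2*(sinh u)^2*(sin v)^4 + (1)*lam*(cosh u)*(sin v)*(cos v)^2 + (1)*lam*(cosh u)*(sin v)^3 + (1/2)*lam*mu*(cos v)^4 + (1)*lam*mu*(sin v)^2*(cos v)^2 + (1/2)*lam*mu*(sin v)^4 + (1/2)*lam*mu*(cosh u)^2*(cos v)^4 + (1)*lam*mu*(cosh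 u)^2*(sin v)^2*(cos v)^2 + (1/2)*lam*mu*(cosh u)^2*(sin v)^4 + (-1/2)*lam*mu*(sinh u)^2*(cos v)^4 + (-1)*lam*mu*(sinh u)^2*(sin v)^2*(cos v)^2 + (-1/2)*lam*mu*(sinh u)^2*(sin v)^4 + (1/2)*lam^2*(cos v)^2 + (-1/4)*lam^2*(cos v)^4 + (-1/2)*lam^2*(sin v)^2 + (-1/2)*lam^2*(sin v)^2*(cos v)^2 + (-1/4)*lam^2*(sin v)^4 + (-1/4)*lam^2*(cosh u)^2*(cos v)^4 + (-1/2)*lam^2*(cosh u)^2*(sin v)^2*(cos v)^2 + (-1/4)*lam^2*(cosh u)^2*(sin v)^4 + (1/4)*lam^2*(sinh u)^2*(cos v)^4 + (1/2)*lam^2*(sinh u)^2*(sin v)^2*(cos v)^2 + (1/4)*lam^2*(sinh u)^2*(sin v)^4) * hc + ((1)*(sinh u)^2 + (-1)*mu*(cosh u)*(sin v) + (1/4)*mu^2 + (-1/4)*mu^2*(cos v)^2 + (-1/4)*mu^2*(sin v)^2 + (1)*mu^2*(sinh u)^2 + (1)*lam*(cosh u)*(sin v) + (1/2)*lam*mu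 + (1/2)*lam*mu*(cos v)^2 + (1/2)*lam*mu*(sin v)^2 + (-3/4)*lam^2 + (-1/4)*lam^2*(cos v)^2 + (-1/4)*lam^2*(sin v)^2 + (-1)*lam^2*(sinh u)^2) * hS + ((-1)*(cos v)^2 + (1)*(sinh u)^2 + (-2)*(sinh u)^2*(cos v)^2) * hm
    · linear_combination ((-1/2)*mu*(sinh u)*(cos v)^3 + (-1/2)*mu*(sinh u)*(sin v)^2*(cos v) + (1/2)*lam*(sinh u)*(cos v)^3 + (1/2)*lam*(sinh u)*(sin v)^2*(cos v)) * hc + ((-1/2)*mu*(sinh u)*(cos v) + (1/2)*lam*(sinh u)*(cos v)) * hS + ((1)*(sinh u)*(cosh u)*(sin v)*(cos v)) * hm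
  · simp [X1, X2, X3]
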